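/- arXiv:2502.08022 — 2 statements merged into one kernel-verified Lean document; each statement's English description precedes it below -/
import Mathlib

section
/- Let φ(θ,v) = v + r(θ)·ψ(θ,v) where r(θ) = (1−F(θ))/f(θ) > 0 and ψ(θ,v) = [∂G(v|θ)/∂θ]/g(v|θ) ≤ 0. If v ↦ ψ(θ,v)/v is weakly increasing (equivalently |ψ(θ,v)| grows slower than v), then the marginal price v ↦ c·v/φ(θ,v) is weakly decreasing in v on the region where φ(θ,v) > 0. In particular, a sufficient condition is that v ↦ |ψ(θ,v)| is weakly decreasing. -/
/-- Let `φ(θ,v) = v + r·ψ(v)` with `r = (1−F(θ))/f(θ) > 0` and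
`ψ(v) = [∂G(v|θ)/∂θ]/g(v|θ) ≤ 0`. If `v ↦ ψ(v)/v` is weakly increasing (on `v > 0`),
then the marginal price `v ↦ c·v/φ(θ,v)` is weakly decreasing on the region where
`φ(θ,v) > 0`. In particular, a sufficient condition is that `v ↦ |ψ(v)|` is weakly
decreasing. -/
theorem stmt_10 (c r : ℝ) (hc : 0 < c) (hr : 0 < r) (ψ : ℝ → ℝ)
    (hψ : ∀ v : ℝ, 0 < v → ψ v ≤ 0) :
    (MonotoneOn (fun v => ψ v / v) (Set.Ioi 0) →
      AntitoneOn (fun v => c * v / (v + r * ψ v))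
        {v : ℝ | 0 < v ∧ 0 < v + r * ψ v}) ∧
    (AntitoneOn (fun v => |ψ v|) (Set.Ioi 0) →
      MonotoneOn (fun v => ψ v / v) (Set.Ioi 0)) := by
  constructor
  · intro hmono a ha b hb hab
    obtain ⟨ha0, haφ⟩ := ha
    obtain ⟨hb0, hbφ⟩ := hb
    have h := hmono (Set.mem_Ioi.mpr ha0) (Set.mem_Ioi.mpr hb0) hab
    simp only at h ⊢
    rw [div_le_div_iff₀ hbφ haφ]
    have h3 : ψ a * b ≤ ψ b * a := (div_le_div_iff₀ ha0 hb0).mp h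
    nlinarith [mul_le_mul_of_nonneg_left h3 (le_of_lt (mul_pos hc hr))]
  · intro hanti a ha b hb hab
    have ha0 : (0:ℝ) < a := ha
    have hb0 : (0:ℝ) < b := hb
    have h := hanti ha hb hab
    simp only at h ⊢
    have hψa : ψ a = -|ψ a| := by
      rw [abs_of_nonpos (hψ a ha0)]; ring
    have hψb : ψ b = -|ψ b| := by
      rw [abs_of_nonpos (hψ b hb0)]; ring
    rw [hψa, hψb, neg_div, neg_div, neg_le_neg_iff]
    exact div_le_div₀ (abs_nonneg _) h ha0 hab
end

section
/- In the multiplicative setting with monotone hazard rate, the ratio of the θ-derivative of the expected utility in the optimal mechanism to that in the spot market equals (p^S/c · φ_F(θ)/θ)^{α/(1−α)}, which is weakly increasing in θ; hence the information-rent shortfall relative to the spot market's outside option is nonincreasing in θ, and no distortion is needed for θ above the cutoff θ* defined by φ_F(θ*)/θ* = c/p^S. -/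
/-- In the multiplicative setting with monotone hazard rate, the ratio
of the θ-derivative of expected utility in the optimal mechanism,
`−(1/θ²)∫(αφ_F(θ)z/c)^(α/(1−α)) z h(z) dz`, to that under the spot market,
`−(1/θ²)∫(αzθ/p^S)^(α/(1−α)) z h(z) dz`, equals `(p^S/c · φ_F(θ)/θ)^(α/(1−α))`,
which is weakly increasing in `θ`; hence it is `≥ 1` for all `θ` above the cutoff
`θ*` defined by `φ_F(θ*)/θ* = c/p^S` (no distortion needed above `θ*`). -/
theorem stmt_16 (θlo θhi zlo zhi α c pS θstar : ℝ)
    (hα : α ∈ Set.Ioo (0:ℝ) 1) (hc : 0 < c) (hpS : c < pS)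
    (hθlo : 0 < θlo) (hθ : θlo < θhi) (hz : 0 < zlo) (hzz : zlo < zhi)
    (φF : ℝ → ℝ) (h : ℝ → ℝ)
    (hφFpos : ∀ θ ∈ Set.Icc θlo θhi, 0 < φF θ)
    (hratio_mono : MonotoneOn (fun θ => φF θ / θ) (Set.Icc θlo θhi))
    (hh : ∀ z ∈ Set.Icc zlo zhi, 0 < h z)
    (hhcont : ContinuousOn h (Set.Icc zlo zhi))
    (hstar : θstar ∈ Set.Icc θlo θhi) (hcut : φF θstar / θstar = c / pS) :
    ∀ θ ∈ Set.Icc θlo θhi,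
      (-(1 / θ ^ 2) * ∫ z in zlo..zhi, (α * φF θ * z / c) ^ (α/(1-α)) * z * h z) /
      (-(1 / θ ^ 2) * ∫ z in zlo..zhi, (α * z * θ / pS) ^ (α/(1-α)) * z * h z)
        = (pS / c * (φF θ / θ)) ^ (α/(1-α)) ∧
      MonotoneOn (fun τ => (pS / c * (φF τ / τ)) ^ (α/(1-α))) (Set.Icc θlo θhi) ∧
      (θstar ≤ θ → 1 ≤ (pS / c * (φF θ / θ)) ^ (α/(1-α))) := by
  obtain ⟨hα0, hα1⟩ := hα
  have he : 0 ≤ α / (1 - α) := div_nonneg hα0.le (by linarith)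
  have hpS0 : 0 < pS := lt_trans hc hpS
  -- monotonicity claim, proved once
  have hmono : MonotoneOn (fun τ => (pS / c * (φF τ / τ)) ^ (α/(1-α))) (Set.Icc θlo θhi) := by
    intro x hx y hy hxy
    have hxpos : 0 < φF x / x := div_pos (hφFpos x hx) (lt_of_lt_of_le hθlo hx.1)
    have hb : 0 ≤ pS / c * (φF x / x) := by positivity
    exact Real.rpow_le_rpow hb
      (mul_le_mul_of_nonneg_left (hratio_mono hx hy hxy) (by positivity)) he
  intro θ hθmem
  have hθpos : 0 < θ := lt_of_lt_of_le hθlo hθmem.1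
  have hφ : 0 < φF θ := hφFpos θ hθmem
  refine ⟨?_, hmono, ?_⟩
  · -- ratio equality
    set e := α / (1 - α) with he'
    set k := (pS / c * (φF θ / θ)) ^ e with hk
    have hkpos : 0 < k := Real.rpow_pos_of_pos (by positivity) e
    -- the spot integral is positive
    have hcont : ContinuousOn (fun z => (α * z * θ / pS) ^ e * z * h z) (Set.Icc zlo zhi) := by
      apply ContinuousOn.mul (ContinuousOn.mul ?_ continuousOn_id) hhcont
      apply ContinuousOn.rpow_const
      · fun_prop
      · intro z _; exact Or.inr he
    have huIcc : Set.uIcc zlo zhi = Set.Icc zlo zhi := Set.uIcc_of_le hzz.le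
    have hint : IntervalIntegrable (fun z => (α * z * θ / pS) ^ e * z * h z)
        MeasureTheory.volume zlo zhi := by
      apply ContinuousOn.intervalIntegrable; rwa [huIcc]
    have hIpos : 0 < ∫ z in zlo..zhi, (α * z * θ / pS) ^ e * z * h z := by
      apply intervalIntegral.intervalIntegral_pos_of_pos_on hint _ hzz
      intro z hzmem
      have hz0 : 0 < z := lt_trans hz hzmem.1
      have := hh z ⟨hzmem.1.le, hzmem.2.le⟩
      have : 0 < (α * z * θ / pS) ^ e := Real.rpow_pos_of_pos (by positivity) e
      positivity
    -- integrand identity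
    have hEq : (∫ z in zlo..zhi, (α * φF θ * z / c) ^ e * z * h z)
        = k * ∫ z in zlo..zhi, (α * z * θ / pS) ^ e * z * h z := by
      rw [← intervalIntegral.integral_const_mul]
      apply intervalIntegral.integral_congr
      intro z hzmem
      rw [huIcc] at hzmem
      have hz0 : 0 < z := lt_of_lt_of_le hz hzmem.1
      have hbase : α * φF θ * z / c = (pS / c * (φF θ / θ)) * (α * z * θ / pS) := by
        field_simp
      simp only
      rw [hbase, Real.mul_rpow (by positivity) (by positivity), hk]
      ring
    rw [hEq]
    have hθ2 : -(1 / θ ^ 2) ≠ 0 := by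
      have : (0:ℝ) < 1 / θ ^ 2 := by positivity
      simpa using this.ne'
    rw [show -(1 / θ ^ 2) * (k * ∫ z in zlo..zhi, (α * z * θ / pS) ^ e * z * h z)
        = k * (-(1 / θ ^ 2) * ∫ z in zlo..zhi, (α * z * θ / pS) ^ e * z * h z) by ring]
    exact mul_div_cancel_right₀ k (mul_ne_zero hθ2 hIpos.ne')
  · -- above cutoff
    intro hge
    have h1 : c / pS ≤ φF θ / θ := hcut ▸ hratio_mono hstar hθmem hge
    have h2 : (1:ℝ) ≤ pS / c * (φF θ / θ) := by
      have : pS / c * (c / pS) ≤ pS / c * (φF θ / θ) :=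
        mul_le_mul_of_nonneg_left h1 (by positivity)
      calc (1:ℝ) = pS / c * (c / pS) := by field_simp
        _ ≤ _ := this
    calc (1:ℝ) = (1:ℝ) ^ (α/(1-α)) := (Real.one_rpow _).symm
      _ ≤ (pS / c * (φF θ / θ)) ^ (α/(1-α)) := Real.rpow_le_rpow zero_le_one h2 he
end
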